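/- Let M be a von Neumann algebra on H with cyclic separating vector Ω, and let D ⊆ M be a subset such that DΩ is a core for the Tomita operator S. Suppose a bounded operator O commutes with every element of D. Then O commutes with every element of M, i.e., O ∈ M'. -/

import Mathlib

/-! Since `Ω` is separating for `M`, it is cyclic for `M'`: the projection onto the closure of
`M'Ω` lies in `M'' = M` and fixes `Ω`. For `a ∈ M` and `b, c ∈ M'` the matrix coefficient
`⟪[O, a] bΩ, cΩ⟫` equals `⟪O b (aΩ), cΩ⟫ - ⟪O bΩ, c (a*Ω)⟫`, a continuous function of the pair
`(aΩ, a*Ω)` that vanishes for `a ∈ D`. The core property makes it vanish for every `a ∈ M`, and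
cyclicity of `Ω` for `M'` then gives `[O, a] = 0`. -/

variable {H : Type*} [NormedAddCommGroup H] [InnerProductSpace ℂ H] [CompleteSpace H]

def CyclicVector (S : Set (H →L[ℂ] H)) (Ω : H) : Prop :=
  Dense ((Submodule.span ℂ ((fun a : H →L[ℂ] H => a Ω) '' S) : Submodule ℂ H) : Set H)

def SeparatingVector (S : Set (H →L[ℂ] H)) (Ω : H) : Prop :=
  ∀ a ∈ S, a Ω = 0 → a = 0

open ContinuousLinearMap Filter Topology VonNeumannAlgebra
open scoped InnerProductSpace

theorem Submodule.span_image_apply_mem_invtSubmodule {𝕜 E A : Type*} [RCLike 𝕜]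
    [NormedAddCommGroup E] [NormedSpace 𝕜 E] [SetLike A (E →L[𝕜] E)]
    [MulMemClass A (E →L[𝕜] E)] {S : A} {y : E →L[𝕜] E} (hy : y ∈ S) (x : E) :
    Submodule.span 𝕜 ((fun a : E →L[𝕜] E => a x) '' S) ∈
      Module.End.invtSubmodule (y : E →ₗ[𝕜] E) := by
  rw [Module.End.mem_invtSubmodule, Submodule.span_le]
  rintro _ ⟨b, hb, rfl⟩
  exact Submodule.subset_span ⟨y * b, mul_mem hy hb, rfl⟩

theorem SeparatingVector.cyclicVector_commutant {M : VonNeumannAlgebra H} {Ω : H}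
    (hsep : SeparatingVector (M : Set (H →L[ℂ] H)) Ω) :
    CyclicVector (M.commutant : Set (H →L[ℂ] H)) Ω := by
  set K := (Submodule.span ℂ ((fun a : H →L[ℂ] H => a Ω) '' M.commutant)).topologicalClosure
  have hPM : K.starProjection ∈ M := by
    rw [IsStarProjection.mem_iff isStarProjection_starProjection, Submodule.range_starProjection]
    exact fun y hy => Submodule.topologicalClosure_mem_invtSubmodule
      (Submodule.span_image_apply_mem_invtSubmodule hy Ω)
  have hΩ : Ω ∈ K := Submodule.le_topologicalClosure _ <|
    Submodule.subset_span ⟨1, one_mem _, rfl⟩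
  have hP : 1 - K.starProjection = 0 :=
    hsep _ (sub_mem (one_mem M) hPM) (by simp [Submodule.starProjection_eq_self_iff.mpr hΩ])
  rw [CyclicVector, Submodule.dense_iff_topologicalClosure_eq_top]
  change K = ⊤
  rw [← K.range_starProjection, ← sub_eq_zero.mp hP]
  exact LinearMap.range_id

omit [CompleteSpace H] in
theorem CyclicVector.eq_zero_of_inner_left {S : Set (H →L[ℂ] H)} {Ω x : H}
    (hcyc : CyclicVector S Ω) (h : ∀ c ∈ S, ⟪x, c Ω⟫_ℂ = 0) : x = 0 := by
  have : innerSL ℂ x = 0 := ContinuousLinearMap.ext_on hcyc <| by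
    rintro _ ⟨c, hc, rfl⟩
    exact h c hc
  simpa using congr($this x)

omit [CompleteSpace H] in
theorem CyclicVector.ext {S : Set (H →L[ℂ] H)} {Ω : H} (hcyc : CyclicVector S Ω)
    {T T' : H →L[ℂ] H} (h : ∀ b ∈ S, T (b Ω) = T' (b Ω)) : T = T' :=
  ContinuousLinearMap.ext_on hcyc <| by
    rintro _ ⟨b, hb, rfl⟩
    exact h b hb

theorem VonNeumannAlgebra.inner_commutator_apply_eq {M : VonNeumannAlgebra H}
    (O : H →L[ℂ] H) {a b c : H →L[ℂ] H} (ha : a ∈ M) (hb : b ∈ M.commutant)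
    (hc : c ∈ M.commutant) (Ω : H) :
    ⟪(O * a - a * O) (b Ω), c Ω⟫_ℂ = ⟪O (b (a Ω)), c Ω⟫_ℂ - ⟪O (b Ω), c (star a Ω)⟫_ℂ := by
  have hab : a (b Ω) = b (a Ω) := congr($(mem_commutant_iff.mp hb a ha) Ω)
  have hac : star a (c Ω) = c (star a Ω) := congr($(mem_commutant_iff.mp hc _ (star_mem ha)) Ω)
  rw [sub_apply, inner_sub_left, mul_apply_eq_comp, mul_apply_eq_comp,
    hab, ← adjoint_inner_right a, ← star_eq_adjoint, hac]

theorem VonNeumannAlgebra.inner_commutator_apply_eq_zero_of_tendsto {M : VonNeumannAlgebra H}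
    {O a b c : H →L[ℂ] H} {Ω : H} (ha : a ∈ M) (hb : b ∈ M.commutant)
    (hc : c ∈ M.commutant) {u : ℕ → H →L[ℂ] H} (huM : ∀ n, u n ∈ M)
    (hOu : ∀ n, O * u n = u n * O) (hu : Tendsto (fun n => u n Ω) atTop (𝓝 (a Ω)))
    (hu_star : Tendsto (fun n => star (u n) Ω) atTop (𝓝 (star a Ω))) :
    ⟪(O * a - a * O) (b Ω), c Ω⟫_ℂ = 0 := by
  have hlim : Tendsto (fun n => ⟪O (b (u n Ω)), c Ω⟫_ℂ - ⟪O (b Ω), c (star (u n) Ω)⟫_ℂ) atTop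
      (𝓝 (⟪O (b (a Ω)), c Ω⟫_ℂ - ⟪O (b Ω), c (star a Ω)⟫_ℂ)) :=
    (((O.continuous.comp b.continuous).tendsto _).comp hu).inner tendsto_const_nhds |>.sub
      (tendsto_const_nhds.inner ((c.continuous.tendsto _).comp hu_star))
  rw [inner_commutator_apply_eq O ha hb hc]
  refine tendsto_nhds_unique hlim ?_
  simp only [← inner_commutator_apply_eq O (huM _) hb hc, hOu, sub_self, zero_apply,
    inner_zero_left, tendsto_const_nhds]

theorem stmt16_general (M : VonNeumannAlgebra H) (Ω : H)
    (hsep : SeparatingVector (M : Set (H →L[ℂ] H)) Ω)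
    (D : Set (H →L[ℂ] H)) (hD : D ⊆ (M : Set (H →L[ℂ] H)))
    (hcore : ∀ a ∈ M, ∃ u : ℕ → (H →L[ℂ] H), (∀ n, u n ∈ D) ∧
      Filter.Tendsto (fun n => u n Ω) Filter.atTop (nhds (a Ω)) ∧
      Filter.Tendsto (fun n => (star (u n)) Ω) Filter.atTop
        (nhds ((star a : H →L[ℂ] H) Ω)))
    (O : H →L[ℂ] H) (hO : ∀ d ∈ D, O * d = d * O) :
    O ∈ M.commutant := by
  have hcyc := hsep.cyclicVector_commutant
  rw [mem_commutant_iff]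
  intro a ha
  obtain ⟨u, huD, hu, hu_star⟩ := hcore a ha
  refine (sub_eq_zero.mp (hcyc.ext fun b hb => hcyc.eq_zero_of_inner_left fun c hc => ?_)).symm
  exact inner_commutator_apply_eq_zero_of_tendsto ha hb hc
    (fun n => hD (huD n)) (fun n => hO _ (huD n)) hu hu_star

/-- Let `M` be a von Neumann algebra with cyclic separating vector `Ω`, and let
`D ⊆ M` be a subset such that `DΩ` is a core for the Tomita operator `S`, in the
sense that for every `a ∈ M` there is a sequence `aₙ ∈ D` with `aₙΩ → aΩ` and
`aₙ*Ω → a*Ω`.  If a bounded operator `O` commutes with every element of `D`,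
then `O` commutes with every element of `M`, i.e. `O ∈ M'`. -/
theorem stmt16 (M : VonNeumannAlgebra H) (Ω : H)
    (hcyc : CyclicVector (M : Set (H →L[ℂ] H)) Ω)
    (hsep : SeparatingVector (M : Set (H →L[ℂ] H)) Ω)
    (D : Set (H →L[ℂ] H)) (hD : D ⊆ (M : Set (H →L[ℂ] H)))
    (hcore : ∀ a ∈ M, ∃ u : ℕ → (H →L[ℂ] H), (∀ n, u n ∈ D) ∧
      Filter.Tendsto (fun n => u n Ω) Filter.atTop (nhds (a Ω)) ∧
      Filter.Tendsto (fun n => (star (u n)) Ω) Filter.atTop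
        (nhds ((star a : H →L[ℂ] H) Ω)))
    (O : H →L[ℂ] H) (hO : ∀ d ∈ D, O * d = d * O) :
    O ∈ M.commutant :=
  stmt16_general M Ω hsep D hD hcore O hO
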